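/- In the tree reduced instance, for every W ⊆ V \ {z*_1}: if W contains some vertex of {z*_2, …, z*_{m+1−ℓ}}, then no vertex z with τ(z) = c is reachable from z*_1 in the induced subgraph of G on V \ W (equivalently, H_W ∩ τ⁻¹(c) = ∅). -/

import Mathlib

/-- Vertices of the tree reduced instance: for each `i ∈ [m]`, the path `P^(i)` has
vertices `v i j` (`j : Fin 3`, the vertices `v^(i)_1, v^(i)_2, v^(i)_3`), `u i k`
(`k : Fin (3ℓ)`, the vertices `u^(i)_1, …, u^(i)_{3ℓ}`) and `w i`; the path `P^#` has
vertices `zh 0, zh 1`; the path `P^*` has vertices `zs t` for `t : Fin (m + 1 - ℓ)`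
(all 0-indexed). -/
inductive VT (ℓ m : ℕ) : Type
  | v (i : Fin m) (j : Fin 3) : VT ℓ m
  | u (i : Fin m) (k : Fin (3 * ℓ)) : VT ℓ m
  | w (i : Fin m) : VT ℓ m
  | zh (j : Fin 2) : VT ℓ m
  | zs (t : Fin (m + 1 - ℓ)) : VT ℓ m
  deriving DecidableEq

/-- The candidate set `C = U ∪ {c, d}`, where `U = {1, …, 3ℓ}`. -/
inductive CandT (ℓ : ℕ) : Type
  | elem (k : Fin (3 * ℓ)) : CandT ℓ
  | c : CandT ℓ
  | d : CandT ℓ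
  deriving DecidableEq

/-- Base edge relation of the tree reduced instance: consecutive vertices of each path
`P^(i) = (v^(i)_1, v^(i)_2, v^(i)_3, u^(i)_1, …, u^(i)_{3ℓ}, w^(i))`, of
`P^# = (z#_1, z#_2)` and of `P^* = (z*_1, …, z*_{m+1−ℓ})` are adjacent, and the last
vertex `z*_{m+1−ℓ}` of `P^*` is joined to each head `v^(i)_1` and to `z#_1`. -/
def baseRelT (ℓ m : ℕ) : VT ℓ m → VT ℓ m → Prop
  | .v i j, .v i' j' => i = i' ∧ (j : ℕ) + 1 = (j' : ℕ)
  | .v i j, .u i' k => i = i' ∧ (j : ℕ) = 2 ∧ (k : ℕ) = 0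
  | .u i k, .u i' k' => i = i' ∧ (k : ℕ) + 1 = (k' : ℕ)
  | .u i k, .w i' => i = i' ∧ (k : ℕ) + 1 = 3 * ℓ
  | .zh j, .zh j' => (j : ℕ) + 1 = (j' : ℕ)
  | .zs t, .zs t' => (t : ℕ) + 1 = (t' : ℕ)
  | .zs t, .v _ j => (t : ℕ) + 1 = m + 1 - ℓ ∧ (j : ℕ) = 0
  | .zs t, .zh j => (t : ℕ) + 1 = m + 1 - ℓ ∧ (j : ℕ) = 0
  | _, _ => False

/-- The tree of the tree reduced instance. -/
def GT (ℓ m : ℕ) : SimpleGraph (VT ℓ m) := SimpleGraph.fromRel (baseRelT ℓ m)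

/-- The voting function, given an enumeration `e i 0, e i 1, e i 2` of the elements of
each set `S_i`: `v^(i)_j` votes for `e^(i)_j`, `u^(i)_k` votes for `k`, the `w^(i)` and
`z#`'s vote for `c`, and the `z*`'s vote for `d`. -/
def τT (ℓ m : ℕ) (e : Fin m → Fin 3 → Fin (3 * ℓ)) : VT ℓ m → CandT ℓ
  | .v i j => CandT.elem (e i j)
  | .u _ k => CandT.elem k
  | .w _ => CandT.c
  | .zh _ => CandT.c
  | .zs _ => CandT.d

/-- The set `S_i`, recovered from the enumeration of its elements. -/
def SetT (ℓ m : ℕ) (e : Fin m → Fin 3 → Fin (3 * ℓ)) (i : Fin m) :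
    Finset (Fin (3 * ℓ)) :=
  Finset.image (e i) Finset.univ

/-- The distinguished vertex `x = z*_1`. -/
def xT (ℓ m : ℕ) (h : 0 < m + 1 - ℓ) : VT ℓ m := VT.zs ⟨0, h⟩

/-- `HW G W x`: the set of vertices reachable from `x` in the subgraph of `G` induced on
the complement of `W` (each step of a connecting walk must avoid `W`). -/
def HW {V : Type*} (G : SimpleGraph V) (W : Set V) (x : V) : Set V :=
  {z | Relation.ReflTransGen (fun a b => G.Adj a b ∧ a ∉ W ∧ b ∉ W) x z}

/-- Candidate `c` uniquely wins the election restricted to `W`: every other candidate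
gets strictly fewer votes among the voters of `H_W`. -/
def winsT (ℓ m : ℕ) (e : Fin m → Fin 3 → Fin (3 * ℓ)) (x : VT ℓ m)
    (W : Set (VT ℓ m)) : Prop :=
  ∀ y : CandT ℓ, y ≠ CandT.c →
    (HW (GT ℓ m) W x ∩ τT ℓ m e ⁻¹' {y}).ncard <
      (HW (GT ℓ m) W x ∩ τT ℓ m e ⁻¹' {CandT.c}).ncard

/-! Every vertex `z*_s` with `s` below the last index of `P*` has only path neighbours
`z*_{s-1}` and `z*_{s+1}`, so a walk from `z*_1` that avoids `z*_t ∈ W` can never pass `z*_t`: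
it stays among the `z*`'s, which all vote for `d`. -/

theorem HW_subset_of_forall_adj {V : Type*} {G : SimpleGraph V} {W S : Set V} {x : V}
    (hx : x ∈ S) (hS : ∀ a b, a ∈ S → G.Adj a b → b ∉ W → b ∈ S) : HW G W x ⊆ S := by
  intro b hb
  induction hb with
  | refl => exact hx
  | tail _ hstep ih => exact hS _ _ ih hstep.1 hstep.2.2

theorem GT_adj_zs_of_succ_lt {ℓ m : ℕ} {s : Fin (m + 1 - ℓ)} {b : VT ℓ m}
    (hs : (s : ℕ) + 1 < m + 1 - ℓ) (hadj : (GT ℓ m).Adj (.zs s) b) :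
    ∃ s' : Fin (m + 1 - ℓ), b = .zs s' ∧ ((s' : ℕ) + 1 = s ∨ (s : ℕ) + 1 = s') := by
  obtain ⟨-, hrel | hrel⟩ := (SimpleGraph.fromRel_adj _ _ _).mp hadj <;>
    cases b <;> simp only [baseRelT] at hrel
  all_goals first | omega | exact ⟨_, rfl, by omega⟩

theorem HW_GT_subset_zs_lt {ℓ m : ℕ} {W : Set (VT ℓ m)} {s₀ t : Fin (m + 1 - ℓ)}
    (hs₀ : s₀ < t) (ht : VT.zs t ∈ W) :
    HW (GT ℓ m) W (.zs s₀) ⊆ {b | ∃ s, b = .zs s ∧ s < t} := by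
  refine HW_subset_of_forall_adj ⟨s₀, rfl, hs₀⟩ ?_
  rintro _ b ⟨s, rfl, hst⟩ hadj hbW
  obtain ⟨s', rfl, hs'⟩ := GT_adj_zs_of_succ_lt (by omega) hadj
  have hs't : s' ≠ t := by rintro rfl; exact hbW ht
  exact ⟨s', rfl, by omega⟩

theorem tree_no_c_voter_reachable (ℓ m : ℕ) (hm : ℓ ≤ m)
    (e : Fin m → Fin 3 → Fin (3 * ℓ))
    (W : Set (VT ℓ m))
    (hhit : ∃ z ∈ W, ∃ t : Fin (m + 1 - ℓ), 1 ≤ (t : ℕ) ∧ z = VT.zs t) :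
    HW (GT ℓ m) W (xT ℓ m (by omega)) ∩ τT ℓ m e ⁻¹' {CandT.c} = ∅ := by
  obtain ⟨_, ht, t, ht1, rfl⟩ := hhit
  refine Set.eq_empty_iff_forall_notMem.mpr ?_
  rintro b ⟨hb, hc⟩
  obtain ⟨s, rfl, -⟩ := HW_GT_subset_zs_lt (s₀ := ⟨0, by omega⟩) (Fin.lt_def.mpr ht1) ht hb
  cases hc
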